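/- Fix an integer M ≥ 1, reals Ae > 0, 0 < z_th < Ae, r₀, r₁ ∈ (0,1) with r₀ + r₁ = 1, and μ > 0. For σ, σ₀ > 0 set x₁ = (z_th − Ae)/√(σ² + σ₀²/M) and x₂ = z_th/σ₀, and define the posterior probability q₀(σ,σ₀) = (1−Q(x₁))·r₁ / ((1−Q(x₁))·r₁ + (1−Q(x₂))·r₀). Then H₂(q₀(σ,σ₀)) / (σ² + σ₀²/M)^μ → 0 as (σ, σ₀) → (0⁺, 0⁺) (Theorem 2, case N̂₁ = 0: the conditional entropy attenuates super-polynomially in the noise variances). -/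

import Mathlib

/-!
Write `v = σ² + σ₀²/M` and `c = (Ae - zth)²/2`. By the symmetry `1 - Q(x) = Q(-x)` and the
Chernoff bound `Q(t) ≤ e^{-t²/2}/2` for `t ≥ 0`, the numerator weight `1 - Q(x₁)` is at most
`e^{-c/v}/2`, while `1 - Q(x₂) ≥ 1 - Q(0) = 1/2`; hence `q₀ ≤ (r₁/r₀) e^{-c/v}`. Since
`H₂(q) ≤ 3√q` on `[0, 1]`, the ratio `H₂(q₀)/v^μ` is at most `3√(r₁/r₀) e^{-c/(2v)}/v^μ`,
which tends to `0` as `v → 0⁺`.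
-/

open MeasureTheory Filter Real

/-- The Gaussian tail function `Q(x) = ∫_x^∞ (1/√(2π)) e^{−u²/2} du`. -/
noncomputable def gaussQ (x : ℝ) : ℝ :=
  ∫ u in Set.Ioi x, (Real.sqrt (2 * Real.pi))⁻¹ * Real.exp (-u ^ 2 / 2)

/-- Binary entropy function. -/
noncomputable def H2 (x : ℝ) : ℝ := -x * Real.log x - (1 - x) * Real.log (1 - x)

open scoped Topology
open ProbabilityTheory

lemma gaussianPDFReal_zero_one :
    gaussianPDFReal 0 1 = fun u => (√(2 * π))⁻¹ * exp (-u ^ 2 / 2) := by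
  ext u; simp [gaussianPDFReal]

lemma gaussQ_eq_setIntegral_gaussianPDFReal (x : ℝ) :
    gaussQ x = ∫ u in Set.Ioi x, gaussianPDFReal 0 1 u := by
  rw [gaussianPDFReal_zero_one, gaussQ]

lemma setIntegral_Ioi_comp_add_right (f : ℝ → ℝ) (t : ℝ) :
    ∫ s in Set.Ioi 0, f (s + t) = ∫ u in Set.Ioi t, f u := by
  simpa [Set.preimage_add_const_Ioi] using
    (measurePreserving_add_right volume t).setIntegral_preimage_emb
      (measurableEmbedding_addRight t) f (Set.Ioi t)

lemma gaussQ_nonneg (x : ℝ) : 0 ≤ gaussQ x :=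
  setIntegral_nonneg measurableSet_Ioi fun _ _ => by positivity

lemma gaussQ_antitone : Antitone gaussQ := fun _ _ hxy => by
  simp only [gaussQ_eq_setIntegral_gaussianPDFReal]
  exact setIntegral_mono_set (integrable_gaussianPDFReal 0 1).integrableOn
    (.of_forall fun _ => gaussianPDFReal_nonneg 0 1 _) (Set.Ioi_subset_Ioi hxy).eventuallyLE

lemma one_sub_gaussQ (x : ℝ) : 1 - gaussQ x = gaussQ (-x) := by
  have hint := (integrable_gaussianPDFReal 0 1).integrableOn (s := Set.Iic x)
  have htotal := intervalIntegral.integral_Iic_add_Ioi hint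
    (integrable_gaussianPDFReal 0 1).integrableOn
  rw [integral_gaussianPDFReal_eq_one 0 one_ne_zero] at htotal
  have hrefl : gaussQ (-x) = ∫ u in Set.Iic x, gaussianPDFReal 0 1 u := by
    rw [gaussQ, ← integral_comp_neg_Iic, gaussianPDFReal_zero_one]
    simp
  rw [hrefl, gaussQ_eq_setIntegral_gaussianPDFReal]
  linarith

lemma gaussQ_zero : gaussQ 0 = 1 / 2 := by
  have h := one_sub_gaussQ 0
  rw [neg_zero] at h
  linarith

/-- Chernoff bound: `(s + t)² ≥ s² + t²` for `s, t ≥ 0` gives `φ(s + t) ≤ e^{-t²/2} φ(s)`. -/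
lemma gaussQ_le_exp {t : ℝ} (ht : 0 ≤ t) : gaussQ t ≤ exp (-t ^ 2 / 2) / 2 := by
  have hφ := integrable_gaussianPDFReal 0 1
  rw [gaussianPDFReal_zero_one] at hφ
  calc gaussQ t
      = ∫ s in Set.Ioi 0, (√(2 * π))⁻¹ * exp (-(s + t) ^ 2 / 2) :=
        (setIntegral_Ioi_comp_add_right _ t).symm
    _ ≤ ∫ s in Set.Ioi 0, exp (-t ^ 2 / 2) * ((√(2 * π))⁻¹ * exp (-s ^ 2 / 2)) := by
        refine setIntegral_mono_on (hφ.comp_add_right t).integrableOn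
          (hφ.const_mul _).integrableOn measurableSet_Ioi fun s (hs : 0 < s) => ?_
        rw [mul_left_comm, ← exp_add]
        gcongr
        nlinarith [mul_nonneg hs.le ht]
    _ = exp (-t ^ 2 / 2) / 2 := by
        rw [integral_const_mul, ← gaussQ, gaussQ_zero, mul_one_div]

lemma H2_eq_binEntropy : H2 = binEntropy := by
  ext x
  simp only [H2, binEntropy, log_inv]
  ring

lemma negMulLog_le_two_mul_sqrt {x : ℝ} (hx : 0 ≤ x) : negMulLog x ≤ 2 * √x := by
  have h := negMulLog_le_one_sub_self (sqrt_nonneg x)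
  calc negMulLog x = 2 * √x * negMulLog √x := by
        conv_lhs => rw [← mul_self_sqrt hx, negMulLog_mul]
        ring
    _ ≤ 2 * √x * 1 := by gcongr; linarith [sqrt_nonneg x]
    _ = 2 * √x := mul_one _

lemma binEntropy_le_three_mul_sqrt {x : ℝ} (h0 : 0 ≤ x) (h1 : x ≤ 1) :
    binEntropy x ≤ 3 * √x := by
  have hx : x ≤ √x := le_sqrt_of_sq_le (by nlinarith)
  rw [binEntropy_eq_negMulLog_add_negMulLog_one_sub]
  linarith [negMulLog_le_two_mul_sqrt h0, negMulLog_le_one_sub_self (sub_nonneg.2 h1)]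

lemma tendsto_exp_neg_div_div_rpow_nhdsGT_zero {c : ℝ} (hc : 0 < c) (μ : ℝ) :
    Tendsto (fun t => exp (-c / t) / t ^ μ) (𝓝[>] 0) (𝓝 0) := by
  refine ((tendsto_rpow_mul_exp_neg_mul_atTop_nhds_zero μ c hc).comp
    tendsto_inv_nhdsGT_zero).congr' ?_
  filter_upwards [self_mem_nhdsWithin] with t (ht : 0 < t)
  rw [Function.comp_apply, inv_rpow ht.le]
  ring_nf

lemma tendsto_binEntropy_div_rpow_of_le_exp {ι : Type*} {l : Filter ι} {q v : ι → ℝ}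
    {C c : ℝ} (μ : ℝ) (hc : 0 < c) (hv : Tendsto v l (𝓝[>] 0))
    (hq0 : ∀ᶠ i in l, 0 ≤ q i) (hq : ∀ᶠ i in l, q i ≤ C * exp (-c / v i)) :
    Tendsto (fun i => binEntropy (q i) / v i ^ μ) l (𝓝 0) := by
  have hbound : Tendsto (fun i => C * exp (-c / v i)) l (𝓝 0) := by
    simpa using ((tendsto_exp_neg_div_div_rpow_nhdsGT_zero hc 0).comp hv).const_mul C
  have hdecay : Tendsto (fun i => 3 * √C * (exp (-(c / 2) / v i) / v i ^ μ)) l (𝓝 0) := by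
    simpa using ((tendsto_exp_neg_div_div_rpow_nhdsGT_zero (half_pos hc) μ).comp hv).const_mul
      (3 * √C)
  have hq1 : ∀ᶠ i in l, q i ≤ 1 := (hq.and (hbound.eventually_le_const one_pos)).mono
    fun i h => h.1.trans h.2
  have hvpos : ∀ᶠ i in l, 0 < v i := hv.eventually self_mem_nhdsWithin
  refine squeeze_zero' ?_ ?_ hdecay
  · filter_upwards [hq0, hq1, hvpos] with i h0 h1 hvi
    exact div_nonneg (binEntropy_nonneg h0 h1) (rpow_nonneg hvi.le μ)
  · filter_upwards [hq0, hq1, hq, hvpos] with i h0 h1 hqi hvi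
    have hsqrt : √(C * exp (-c / v i)) = √C * exp (-(c / 2) / v i) := by
      rw [sqrt_mul' C (exp_pos _).le, ← exp_half]
      ring_nf
    calc binEntropy (q i) / v i ^ μ ≤ 3 * √(C * exp (-c / v i)) / v i ^ μ := by
          gcongr
          exact (binEntropy_le_three_mul_sqrt h0 h1).trans (by gcongr)
      _ = 3 * √C * (exp (-(c / 2) / v i) / v i ^ μ) := by rw [hsqrt]; ring

/-- The paper's posterior `q₀(σ, σ₀) = P(N₁ = 1 | N̂₁ = 0)`. -/
noncomputable def posteriorZero (M : ℕ) (Ae zth r0 r1 σ σ₀ : ℝ) : ℝ :=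
  (1 - gaussQ ((zth - Ae) / √(σ ^ 2 + σ₀ ^ 2 / M))) * r1 /
    ((1 - gaussQ ((zth - Ae) / √(σ ^ 2 + σ₀ ^ 2 / M))) * r1 + (1 - gaussQ (zth / σ₀)) * r0)

section posteriorZero

variable {M : ℕ} {Ae zth r0 r1 σ σ₀ : ℝ}

lemma posteriorZero_nonneg (hr0 : 0 ≤ r0) (hr1 : 0 ≤ r1) :
    0 ≤ posteriorZero M Ae zth r0 r1 σ σ₀ := by
  have hA := gaussQ_nonneg (-((zth - Ae) / √(σ ^ 2 + σ₀ ^ 2 / M)))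
  have hB := gaussQ_nonneg (-(zth / σ₀))
  rw [← one_sub_gaussQ] at hA hB
  unfold posteriorZero
  positivity

lemma posteriorZero_le_exp (hzth : 0 ≤ zth) (hAe : zth ≤ Ae) (hr0 : 0 < r0) (hr1 : 0 ≤ r1)
    (hσ₀ : 0 ≤ σ₀) :
    posteriorZero M Ae zth r0 r1 σ σ₀ ≤
      r1 / r0 * exp (-((Ae - zth) ^ 2 / 2) / (σ ^ 2 + σ₀ ^ 2 / M)) := by
  set v := σ ^ 2 + σ₀ ^ 2 / M
  set A := 1 - gaussQ ((zth - Ae) / √v) with hA_def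
  set B := 1 - gaussQ (zth / σ₀)
  have hA0 : 0 ≤ A := by rw [hA_def, one_sub_gaussQ]; exact gaussQ_nonneg _
  have hA : A ≤ exp (-((Ae - zth) ^ 2 / 2) / v) / 2 := by
    rw [hA_def, one_sub_gaussQ, ← neg_div, neg_sub]
    refine (gaussQ_le_exp (div_nonneg (sub_nonneg.2 hAe) (sqrt_nonneg v))).trans_eq ?_
    rw [div_pow, sq_sqrt (by positivity)]
    ring_nf
  have hB : 1 / 2 ≤ B := by
    linarith [gaussQ_antitone (div_nonneg hzth hσ₀), gaussQ_zero]
  calc posteriorZero M Ae zth r0 r1 σ σ₀ ≤ A * r1 / (B * r0) :=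
        div_le_div_of_nonneg_left (by positivity) (by positivity)
          (le_add_of_nonneg_left (by positivity))
    _ ≤ exp (-((Ae - zth) ^ 2 / 2) / v) / 2 * r1 / (1 / 2 * r0) := by gcongr
    _ = r1 / r0 * exp (-((Ae - zth) ^ 2 / 2) / v) := by field_simp

end posteriorZero

theorem stmt_3_general (M : ℕ) (Ae zth r0 r1 μ : ℝ)
    (hz1 : 0 < zth) (hz2 : zth < Ae)
    (hr0 : r0 ∈ Set.Ioo (0 : ℝ) 1) (hr1 : r1 ∈ Set.Ioo (0 : ℝ) 1) :
    Tendsto (fun p : ℝ × ℝ =>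
        H2 ((1 - gaussQ ((zth - Ae) / Real.sqrt (p.1 ^ 2 + p.2 ^ 2 / M))) * r1 /
            ((1 - gaussQ ((zth - Ae) / Real.sqrt (p.1 ^ 2 + p.2 ^ 2 / M))) * r1 +
              (1 - gaussQ (zth / p.2)) * r0)) /
          (p.1 ^ 2 + p.2 ^ 2 / M) ^ μ)
      ((nhdsWithin 0 (Set.Ioi 0)) ×ˢ (nhdsWithin 0 (Set.Ioi 0))) (nhds 0) := by
  set L := (𝓝[>] (0 : ℝ)) ×ˢ (𝓝[>] (0 : ℝ))
  have hpos : ∀ᶠ p : ℝ × ℝ in L, 0 < p.1 ∧ 0 < p.2 :=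
    prod_mem_prod self_mem_nhdsWithin self_mem_nhdsWithin
  have hv : Tendsto (fun p : ℝ × ℝ => p.1 ^ 2 + p.2 ^ 2 / M) L (𝓝[>] 0) := by
    refine tendsto_nhdsWithin_iff.2
      ⟨?_, hpos.mono fun p hp => Set.mem_Ioi.2 (by have := hp.1; positivity)⟩
    have hL : L ≤ 𝓝 (0, 0) := by
      rw [nhds_prod_eq]; exact prod_mono nhdsWithin_le_nhds nhdsWithin_le_nhds
    simpa using ((by fun_prop : Continuous fun p : ℝ × ℝ => p.1 ^ 2 + p.2 ^ 2 / M).tendsto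
      (0, 0)).mono_left hL
  change Tendsto (fun p : ℝ × ℝ =>
    H2 (posteriorZero M Ae zth r0 r1 p.1 p.2) / (p.1 ^ 2 + p.2 ^ 2 / M) ^ μ) L (𝓝 0)
  rw [H2_eq_binEntropy]
  refine tendsto_binEntropy_div_rpow_of_le_exp (C := r1 / r0) μ
    (div_pos (pow_pos (sub_pos.2 hz2) 2) two_pos) hv
    (.of_forall fun _ => posteriorZero_nonneg hr0.1.le hr1.1.le) ?_
  filter_upwards [hpos] with p hp
  exact posteriorZero_le_exp hz1.le hz2.le hr0.1 hr1.1.le hp.2.le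

theorem stmt_3 (M : ℕ) (hM : 1 ≤ M) (Ae zth r0 r1 μ : ℝ)
    (hAe : 0 < Ae) (hz1 : 0 < zth) (hz2 : zth < Ae)
    (hr0 : r0 ∈ Set.Ioo (0 : ℝ) 1) (hr1 : r1 ∈ Set.Ioo (0 : ℝ) 1)
    (hsum : r0 + r1 = 1) (hμ : 0 < μ) :
    Tendsto (fun p : ℝ × ℝ =>
        H2 ((1 - gaussQ ((zth - Ae) / Real.sqrt (p.1 ^ 2 + p.2 ^ 2 / M))) * r1 /
            ((1 - gaussQ ((zth - Ae) / Real.sqrt (p.1 ^ 2 + p.2 ^ 2 / M))) * r1 +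
              (1 - gaussQ (zth / p.2)) * r0)) /
          (p.1 ^ 2 + p.2 ^ 2 / M) ^ μ)
      ((nhdsWithin 0 (Set.Ioi 0)) ×ˢ (nhdsWithin 0 (Set.Ioi 0))) (nhds 0) :=
  stmt_3_general M Ae zth r0 r1 μ hz1 hz2 hr0 hr1
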